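/- arXiv:1905.03635 — 3 statements merged into one kernel-verified Lean document; each statement's English description precedes it below -/
import Mathlib

section
/- The componentwise (Schur) product of two generalized Reed-Solomon codes with the same support satisfies GRS_r(x,y) ⋆ GRS_t(x,z) = GRS_{r+t-1}(x, y⋆z), where y⋆z is the componentwise product, provided r + t - 1 ≤ n. -/
open Polynomial

def GRS {F : Type*} [Field F] {n : ℕ} (k : ℕ) (x y : Fin n → F) : Set (Fin n → F) :=
  {v | ∃ f : F[X], f.degree < k ∧ ∀ i, v i = y i * f.eval (x i)}

/-- The set of componentwise (Schur) products of elements of `A` and `B`. -/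
def starSet {F : Type*} [Field F] {n : ℕ} (A B : Set (Fin n → F)) : Set (Fin n → F) :=
  {w | ∃ a ∈ A, ∃ b ∈ B, w = a * b}

/-!
The code `GRS_k(x, y)` is the image of the polynomials of degree `< k` under the evaluation map
`f ↦ (y_i f(x_i))_i`, and this map turns products of polynomials into componentwise products
(with multiplier `y ⋆ z`). So the star product is the image of the product of the spaces of
polynomials of degree `≤ r - 1` and `≤ t - 1`, which is the space of degree `≤ r + t - 2`,
because every monomial `X^a` with `a ≤ r + t - 2` splits as `X^b * X^(a-b)` with `b ≤ r - 1`,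
`a - b ≤ t - 1`.
-/

open scoped Pointwise

namespace Polynomial

theorem degreeLE_mul_degreeLE {R : Type*} [CommSemiring R] (m k : ℕ) :
    degreeLE R m * degreeLE R k = degreeLE R ↑(m + k) := by
  classical
  apply le_antisymm
  · refine Submodule.mul_le.2 fun f hf g hg => mem_degreeLE.2 ?_
    rw [Nat.cast_add]
    exact (degree_mul_le f g).trans (add_le_add (mem_degreeLE.1 hf) (mem_degreeLE.1 hg))
  · rw [degreeLE_eq_span_X_pow, Submodule.span_le]
    intro p hp
    obtain ⟨a, ha, rfl⟩ := Finset.mem_image.1 hp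
    have hsplit : (X : R[X]) ^ a = X ^ min a m * X ^ (a - min a m) := by
      rw [← pow_add]
      congr 1
      omega
    have hrest : a - min a m ≤ k := by
      have := Finset.mem_range.1 ha
      omega
    rw [hsplit]
    exact Submodule.mul_mem_mul
      (mem_degreeLE.2 ((degree_X_pow_le _).trans (by exact_mod_cast min_le_right a m)))
      (mem_degreeLE.2 ((degree_X_pow_le _).trans (by exact_mod_cast hrest)))

end Polynomial

theorem Submodule.span_map_mul_map {R A B : Type*} [CommSemiring R] [Semiring A] [Algebra R A]
    [Semiring B] [Algebra R B] {φ ψ χ : A →ₗ[R] B} (h : ∀ a b, χ (a * b) = φ a * ψ b)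
    (P Q : Submodule R A) :
    span R ((P.map φ : Set B) * (Q.map ψ : Set B)) = (P * Q).map χ := by
  rw [mul_eq_span_mul_set, map_span, map_coe, map_coe, ← Set.image2_mul, ← Set.image2_mul,
    Set.image_image2, Set.image2_image_left, Set.image2_image_right]
  simp only [h]

section GRS

variable {F : Type*} [Field F] {n : ℕ}

theorem starSet_eq_mul (A B : Set (Fin n → F)) : starSet A B = A * B := by
  ext w
  simp only [starSet, Set.mem_ofPred_eq, Set.mem_mul, eq_comm]

noncomputable def grsMap (x y : Fin n → F) : F[X] →ₗ[F] (Fin n → F) where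
  toFun f i := y i * f.eval (x i)
  map_add' f g := by funext i; simp [mul_add]
  map_smul' c f := by funext i; simp [mul_left_comm]

theorem grsMap_mul (x y z : Fin n → F) (f g : F[X]) :
    grsMap x (y * z) (f * g) = grsMap x y f * grsMap x z g := by
  funext i
  simp only [grsMap, LinearMap.coe_mk, AddHom.coe_mk, Pi.mul_apply, eval_mul]
  ring

theorem GRS_eq_map (k : ℕ) (x y : Fin n → F) :
    GRS k x y = (degreeLT F k).map (grsMap x y) := by
  ext v
  simp only [GRS, Set.mem_ofPred_eq, SetLike.mem_coe, Submodule.mem_map, mem_degreeLT, grsMap,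
    LinearMap.coe_mk, AddHom.coe_mk, funext_iff, eq_comm]

end GRS

theorem grs_star_product_general {F : Type*} [Field F] {n : ℕ} (r t : ℕ)
    (hr : 1 ≤ r) (ht : 1 ≤ t)
    (x y z : Fin n → F) :
    (Submodule.span F (starSet (GRS r x y) (GRS t x z)) : Set (Fin n → F))
      = GRS (r + t - 1) x (y * z) := by
  obtain ⟨m, rfl⟩ := Nat.exists_eq_add_of_le' hr
  obtain ⟨k, rfl⟩ := Nat.exists_eq_add_of_le' ht
  rw [starSet_eq_mul, GRS_eq_map, GRS_eq_map, GRS_eq_map,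
    Submodule.span_map_mul_map (grsMap_mul x y z), show m + 1 + (k + 1) - 1 = m + k + 1 by omega,
    degreeLT_succ_eq_degreeLE, degreeLT_succ_eq_degreeLE, degreeLT_succ_eq_degreeLE,
    degreeLE_mul_degreeLE]

/-- The star product (span of componentwise products) of two GRS codes with the same
support is the GRS code `GRS_{r+t-1}(x, y ⋆ z)`. -/
theorem grs_star_product {F : Type*} [Field F] {n : ℕ} (r t : ℕ)
    (hr : 1 ≤ r) (ht : 1 ≤ t) (hn : r + t - 1 ≤ n)
    (x y z : Fin n → F) (hx : Function.Injective x)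
    (hy : ∀ i, y i ≠ 0) (hz : ∀ i, z i ≠ 0) :
    (Submodule.span F (starSet (GRS r x y) (GRS t x z)) : Set (Fin n → F))
      = GRS (r + t - 1) x (y * z) :=
  grs_star_product_general r t hr ht x y z
end

section
/- The dual of a generalized Reed-Solomon code is a generalized Reed-Solomon code: GRS_t(x,y)^⊥ = GRS_{n-t}(x, y^⊥), where (y^⊥_j)^{-1} = y_j · ∏_{ℓ≠j} (x_ℓ - x_j). -/
/-!
Lagrange interpolation gives, for `deg h < n`, the top coefficient of `h` as
`coeff_{n-1} h = Σᵢ h(xᵢ) / ∏_{j≠i} (xᵢ - xⱼ)`. Since `yᵢ y'ᵢ = 1 / ∏_{ℓ≠i} (x_ℓ - xᵢ)`, the pairing of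
the codewords of `f` in `GRS_t(x,y)` and `g` in `GRS_{n-t}(x,y')` is `± coeff_{n-1} (f g)`, which vanishes
as `deg (f g) < n - 1`. Conversely every word is `(y'ᵢ g(xᵢ))ᵢ` with `deg g < n`; if `deg g ≥ n - t`, pairing
it with the codeword of `X ^ (n - 1 - deg g)` (a monomial of degree `< t`) yields `± lc g ≠ 0`.
-/

open Polynomial

def dualCode {F : Type*} [Field F] {n : ℕ} (C : Set (Fin n → F)) : Set (Fin n → F) :=
  {z | ∀ c ∈ C, ∑ i, c i * z i = 0}

open Finset

namespace Lagrange

variable {F ι : Type*} [Field F] [DecidableEq ι] {s : Finset ι} {v : ι → F}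

theorem prod_erase_sub_swap {i : ι} (hi : i ∈ s) :
    ∏ j ∈ s.erase i, (v j - v i) = (-1) ^ (#s - 1) * ∏ j ∈ s.erase i, (v i - v j) := by
  rw [← card_erase_of_mem hi, ← prod_neg]
  simp only [neg_sub]

theorem coeff_eq_neg_one_pow_mul_sum (hvs : Set.InjOn v s) {P : F[X]} (hP : P.degree < #s) :
    P.coeff (#s - 1) =
      (-1) ^ (#s - 1) * ∑ i ∈ s, P.eval (v i) / ∏ j ∈ s.erase i, (v j - v i) := by
  rw [coeff_eq_sum hvs hP, mul_sum]
  refine sum_congr rfl fun i hi => ?_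
  rw [prod_erase_sub_swap hi, mul_div_assoc',
    mul_div_mul_left _ _ (pow_ne_zero _ (neg_ne_zero.2 one_ne_zero))]

end Lagrange

namespace Polynomial

variable {R : Type*} [Semiring R] [NoZeroDivisors R]

theorem degree_mul_lt_add_sub_one {f g : R[X]} {a b : ℕ} (hf : f.degree < a) (hg : g.degree < b) :
    (f * g).degree < (a + b - 1 : ℕ) := by
  rcases eq_or_ne f 0 with rfl | hf0
  · simp
  rcases eq_or_ne g 0 with rfl | hg0
  · simp
  rw [← natDegree_lt_iff_degree_lt hf0] at hf
  rw [← natDegree_lt_iff_degree_lt hg0] at hg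
  rw [← natDegree_lt_iff_degree_lt (mul_ne_zero hf0 hg0), natDegree_mul hf0 hg0]
  omega

end Polynomial

section GRS

variable {F : Type*} [Field F] {n : ℕ} {x y y' : Fin n → F}

theorem sum_GRS_mul_eq_neg_one_pow_mul_coeff (hx : Function.Injective x) (hy : ∀ i, y i ≠ 0)
    (hy' : ∀ j, (y' j)⁻¹ = y j * ∏ ℓ ∈ univ.erase j, (x ℓ - x j)) {f g : F[X]}
    (hfg : (f * g).degree < n) :
    ∑ i, y i * f.eval (x i) * (y' i * g.eval (x i)) = (-1) ^ (n - 1) * (f * g).coeff (n - 1) := by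
  have hcoeff := Lagrange.coeff_eq_neg_one_pow_mul_sum (s := univ) hx.injOn (P := f * g)
    (by simpa using hfg)
  simp only [card_univ, Fintype.card_fin] at hcoeff
  rw [hcoeff, ← mul_assoc, ← mul_pow, neg_one_mul, neg_neg, one_pow, one_mul]
  refine sum_congr rfl fun i _ => ?_
  rw [inv_eq_iff_eq_inv.mp (hy' i), eval_mul]
  field_simp [hy i]

theorem mem_GRS_of_injective (hx : Function.Injective x) (hy : ∀ i, y i ≠ 0) (z : Fin n → F) :
    z ∈ GRS n x y := by
  refine ⟨Lagrange.interpolate univ x (fun i => z i / y i), ?_, fun i => ?_⟩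
  · simpa using Lagrange.degree_interpolate_lt (s := univ) (fun i => z i / y i) hx.injOn
  · rw [Lagrange.eval_interpolate_at_node _ hx.injOn (mem_univ i), mul_div_cancel₀ _ (hy i)]

theorem ne_zero_of_inv_eq_mul_prod (hx : Function.Injective x) (hy : ∀ i, y i ≠ 0)
    (hy' : ∀ j, (y' j)⁻¹ = y j * ∏ ℓ ∈ univ.erase j, (x ℓ - x j)) (i : Fin n) : y' i ≠ 0 := by
  intro h
  refine mul_ne_zero (hy i) (prod_ne_zero_iff.2 fun ℓ hℓ => ?_) (by rw [← hy' i, h, inv_zero])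
  exact sub_ne_zero.2 (hx.ne (ne_of_mem_erase hℓ))

theorem GRS_subset_dualCode {t : ℕ} (ht : t ≤ n) (hx : Function.Injective x) (hy : ∀ i, y i ≠ 0)
    (hy' : ∀ j, (y' j)⁻¹ = y j * ∏ ℓ ∈ univ.erase j, (x ℓ - x j)) :
    GRS (n - t) x y' ⊆ dualCode (GRS t x y) := by
  rintro z ⟨g, hg, hz⟩ c ⟨f, hf, hc⟩
  have hfg : (f * g).degree < (n - 1 : ℕ) := by
    simpa [Nat.add_sub_cancel' ht] using degree_mul_lt_add_sub_one hf hg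
  simp_rw [hc, hz]
  rw [sum_GRS_mul_eq_neg_one_pow_mul_coeff hx hy hy' (hfg.trans_le (by exact_mod_cast n.sub_le 1)),
    coeff_eq_zero_of_degree_lt hfg, mul_zero]

theorem dualCode_subset_GRS {t : ℕ} (hx : Function.Injective x) (hy : ∀ i, y i ≠ 0)
    (hy' : ∀ j, (y' j)⁻¹ = y j * ∏ ℓ ∈ univ.erase j, (x ℓ - x j)) :
    dualCode (GRS t x y) ⊆ GRS (n - t) x y' := by
  intro z hz
  obtain ⟨g, hgn, hgz⟩ := mem_GRS_of_injective hx (ne_zero_of_inv_eq_mul_prod hx hy hy') z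
  refine ⟨g, ?_, hgz⟩
  by_contra hgt
  have hg0 : g ≠ 0 := by rintro rfl; simp at hgt
  rw [← natDegree_lt_iff_degree_lt hg0] at hgn hgt
  set k := n - 1 - g.natDegree
  have hk : (X ^ k * g).natDegree = n - 1 := by rw [natDegree_X_pow_mul k hg0]; omega
  have hXk : (fun i => y i * (X ^ k).eval (x i)) ∈ GRS t x y :=
    ⟨X ^ k, by rw [degree_X_pow]; exact_mod_cast (by omega : k < t), fun _ => rfl⟩
  have hpair := hz _ hXk
  simp_rw [hgz] at hpair
  rw [sum_GRS_mul_eq_neg_one_pow_mul_coeff hx hy hy'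
    ((natDegree_lt_iff_degree_lt (by simpa using hg0)).1 (by omega)), ← hk] at hpair
  exact mul_ne_zero (pow_ne_zero _ (neg_ne_zero.2 one_ne_zero))
    (leadingCoeff_ne_zero.2 (by simpa using hg0)) hpair

end GRS

/-- The dual of a GRS code is a GRS code: `GRS_t(x,y)^⊥ = GRS_{n-t}(x,y^⊥)`, where
`(y^⊥_j)⁻¹ = y_j ∏_{ℓ≠j} (x_ℓ - x_j)`. -/
theorem grs_dual {F : Type*} [Field F] {n t : ℕ} (ht : t ≤ n)
    (x y y' : Fin n → F) (hx : Function.Injective x) (hy : ∀ i, y i ≠ 0)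
    (hy' : ∀ j, (y' j)⁻¹ = y j * ∏ ℓ ∈ Finset.univ.erase j, (x ℓ - x j)) :
    dualCode (GRS t x y) = GRS (n - t) x y' :=
  (dualCode_subset_GRS hx hy hy').antisymm (GRS_subset_dualCode ht hx hy hy')
end

section
/- Inclusion of products into duals-intersected-with-subfield: (GRS_{n-r}(x,y') ∩ K^n) ⋆ (GRS_t(x,1) ∩ K^n) ⊆ GRS_{n-r+t-1}(x,y') ∩ K^n, where the star product is taken as a span over K. -/
open Polynomial

/-- The vectors of a code `C ⊆ Fⁿ` whose entries lie in (the image of) `K`. -/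
def subfieldCode (K : Type*) {F : Type*} [Field K] [Field F] [Algebra K F] {n : ℕ}
    (C : Set (Fin n → F)) : Set (Fin n → F) :=
  {v | v ∈ C ∧ ∀ i, v i ∈ Set.range (algebraMap K F)}

/-!
A generator of the span is `(y'ᵢ f(xᵢ))ᵢ ⋆ (g(xᵢ))ᵢ = (y'ᵢ (fg)(xᵢ))ᵢ` with
`deg (fg) < (n - r) + t - 1`, and an entrywise product of vectors over `K` is over `K`. The target
is the intersection of an `F`-subspace with the `K`-subalgebra `Kⁿ`, hence a `K`-subspace, so it
contains the whole span.
-/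

theorem Polynomial.degree_mul_lt_add_sub_one_s8 {R : Type*} [Semiring R] {f g : R[X]} {a b : ℕ}
    (hf : f.degree < a) (hg : g.degree < b) : (f * g).degree < (a + b - 1 : ℕ) := by
  rcases eq_or_ne f 0 with rfl | hf0
  · simp
  rcases eq_or_ne g 0 with rfl | hg0
  · simp
  have hfa := (natDegree_lt_iff_degree_lt hf0).2 hf
  have hgb := (natDegree_lt_iff_degree_lt hg0).2 hg
  calc (f * g).degree ≤ (f * g).natDegree := degree_le_natDegree
    _ ≤ (f.natDegree + g.natDegree : ℕ) := by exact_mod_cast natDegree_mul_le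
    _ < (a + b - 1 : ℕ) := by exact_mod_cast (by omega)

section GRS

variable {F : Type*} [Field F] {n : ℕ}

noncomputable def grsSubmodule (k : ℕ) (x y : Fin n → F) : Submodule F (Fin n → F) :=
  (degreeLT F k).map (LinearMap.pi fun i => y i • leval (x i))

theorem coe_grsSubmodule (k : ℕ) (x y : Fin n → F) : (grsSubmodule k x y : Set _) = GRS k x y := by
  ext v
  simp [grsSubmodule, GRS, mem_degreeLT, funext_iff, eq_comm]

theorem mul_mem_GRS {k l : ℕ} {x y a b : Fin n → F} (ha : a ∈ GRS k x y)
    (hb : b ∈ GRS l x fun _ => 1) : a * b ∈ GRS (k + l - 1) x y := by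
  obtain ⟨f, hf, hfa⟩ := ha
  obtain ⟨g, hg, hgb⟩ := hb
  refine ⟨f * g, degree_mul_lt_add_sub_one_s8 hf hg, fun i => ?_⟩
  rw [Pi.mul_apply, hfa, hgb, eval_mul]
  ring

end GRS

def baseFieldVectors (K F : Type*) [Field K] [Field F] [Algebra K F] (n : ℕ) :
    Subalgebra K (Fin n → F) :=
  Subalgebra.pi Set.univ fun _ => ⊥

theorem subfieldCode_eq_inter (K : Type*) {F : Type*} [Field K] [Field F] [Algebra K F] {n : ℕ}
    (C : Set (Fin n → F)) : subfieldCode K C = C ∩ baseFieldVectors K F n := by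
  ext v
  simp [subfieldCode, baseFieldVectors]

theorem grs_subfield_star_subset_general (K F : Type*) [Field K] [Field F] [Algebra K F]
    {n : ℕ} (r t : ℕ)
    (x y' : Fin n → F) :
    (Submodule.span K (starSet (subfieldCode K (GRS (n - r) x y'))
        (subfieldCode K (GRS t x (fun _ => 1)))) : Set (Fin n → F))
      ⊆ subfieldCode K (GRS (n - r + t - 1) x y') := by
  let target : Submodule K (Fin n → F) :=
    (grsSubmodule (n - r + t - 1) x y').restrictScalars K ⊓
      Subalgebra.toSubmodule (baseFieldVectors K F n)
  have htarget : (target : Set _) = subfieldCode K (GRS (n - r + t - 1) x y') := by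
    simp [target, subfieldCode_eq_inter, coe_grsSubmodule]
  rw [← htarget, SetLike.coe_subset_coe, Submodule.span_le, subfieldCode_eq_inter,
    subfieldCode_eq_inter]
  rintro _ ⟨a, ⟨haC, haK⟩, b, ⟨hbC, hbK⟩, rfl⟩
  rw [htarget, subfieldCode_eq_inter]
  exact ⟨mul_mem_GRS haC hbC, (baseFieldVectors K F n).mul_mem haK hbK⟩

/-- `(GRS_{n-r}(x,y') ∩ Kⁿ) ⋆ (GRS_t(x,1) ∩ Kⁿ) ⊆ GRS_{n-r+t-1}(x,y') ∩ Kⁿ`, the star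
product being the span over `K`. -/
theorem grs_subfield_star_subset (K F : Type*) [Field K] [Field F] [Algebra K F]
    {n : ℕ} (r t : ℕ) (hr : 1 ≤ r) (ht : 1 ≤ t) (hrn : r ≤ n)
    (hn : n - r + t - 1 ≤ n)
    (x y' : Fin n → F) (hx : Function.Injective x) (hy' : ∀ i, y' i ≠ 0) :
    (Submodule.span K (starSet (subfieldCode K (GRS (n - r) x y'))
        (subfieldCode K (GRS t x (fun _ => 1)))) : Set (Fin n → F))
      ⊆ subfieldCode K (GRS (n - r + t - 1) x y') :=
  grs_subfield_star_subset_general K F r t x y'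
end
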